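/- Let S be a nonempty semigroup such that S \ E(S) is finite, and let T be an S-valued sequence of length |S \ E(S)| with Π(T) ∩ E(S) = ∅. Then there is an enumeration x_1, ..., x_k of the distinct elements of supp(T) such that: the subsemigroup ⟨supp(T)⟩ generated by supp(T) equals ⋃_{i=1}^k ⟨x_i⟩ and is commutative; x_i * x_j = x_j for all 1 ≤ i < j ≤ k; the sets of non-idempotent elements of the cyclic subsemigroups ⟨x_i⟩ are pairwise disjoint; every element of S outside ⟨supp(T)⟩ is an idempotent; and for each i, ⟨x_i⟩ is finite with I(x_i) ≡ 1 (mod P(x_i)) and v_{x_i}(T) = I(x_i) + P(x_i) − 2. -/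

import Mathlib

/-- Product, in order, of the nonempty list `a :: l` in a semigroup. -/
def sprod {S : Type*} [Mul S] (a : S) (l : List S) : S := l.foldl (· * ·) a

/-- `pow1 x n = x^(n+1)`: the `(n+1)`-st power of `x` in a semigroup. -/
def pow1 {S : Type*} [Mul S] (x : S) : ℕ → S := fun n => Nat.rec x (fun _ y => y * x) n

/-- `Π(T)`: the set of products, in order, of nonempty lists which are
permutations of order-preserving sublists of `T`. -/
def PiSet {S : Type*} [Mul S] (T : List S) : Set S :=
  {s | ∃ u : List S, u.Sublist T ∧ ∃ a l, (a :: l).Perm u ∧ sprod a l = s}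

/-- `A(L)`: the set of products, in order, of nonempty order-preserving sublists of `L`. -/
def ASet {S : Type*} [Mul S] (L : List S) : Set S :=
  {s | ∃ a l, (a :: l).Sublist L ∧ sprod a l = s}

/-- `HasIndexPeriod x r p` says that `r` is the index of `x` (the least `r > 0` such
that `x^r = x^t` for some positive `t ≠ r`) and `p` is the period of `x` (the least
`p > 0` with `x^(r+p) = x^r`). Powers are expressed via `pow1 x (n-1) = x^n`. -/
def HasIndexPeriod {S : Type*} [Mul S] (x : S) (r p : ℕ) : Prop :=
  (0 < r ∧ (∃ t, 0 < t ∧ t ≠ r ∧ pow1 x (t - 1) = pow1 x (r - 1)) ∧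
    ∀ r', 0 < r' → (∃ t, 0 < t ∧ t ≠ r' ∧ pow1 x (t - 1) = pow1 x (r' - 1)) → r ≤ r') ∧
  (0 < p ∧ pow1 x (r + p - 1) = pow1 x (r - 1) ∧
    ∀ p', 0 < p' → pow1 x (r + p' - 1) = pow1 x (r - 1) → p ≤ p')

/-!
Adding a term `t` to an idempotent-product free sequence strictly enlarges `Π`: otherwise `Π`
would contain every power of `t`, among them its idempotent power. Hence `|Π(U)| ≥ |U|` for every
subsequence `U` of `T`, while `Π(T) ⊆ S \ E(S)` has at most `|T|` elements; so `|Π(U)| = |U|` for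
all such `U`, and `Π(T) = S \ E(S)`. For two distinct terms `x, y` this gives `Π(xy) = {x, y}`,
so one of them absorbs the other on both sides and `supp(T)` is a chain for absorption.
Taking for `U` the `v_x(T)` copies of `x` shows that `x, …, x^{v_x(T)}` are distinct
non-idempotents. The sets `⟨x_i⟩ \ E(S)` are disjoint subsets of `S \ E(S)` and
`|⟨x⟩ \ E(S)| = I + P - 2`, so counting forces `v_x(T) = I + P - 2`; hence the unique idempotent
power of `x` is `x^{I+P-1}`, whence `P ∣ I - 1`.
-/

section

variable {S : Type*} [Semigroup S]

theorem sprod_cons (a b : S) (l : List S) : sprod a (b :: l) = a * sprod b l := by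
  induction l generalizing b with
  | nil => rfl
  | cons c l ih =>
    show sprod (a * b * c) l = _
    rw [mul_assoc]
    exact ih (b * c)

@[simp] theorem pow1_zero (x : S) : pow1 x 0 = x := rfl

theorem pow1_succ (x : S) (n : ℕ) : pow1 x (n + 1) = pow1 x n * x := rfl

theorem pow1_add (x : S) (m n : ℕ) : pow1 x (m + n + 1) = pow1 x m * pow1 x n := by
  induction n with
  | zero => rfl
  | succ n ih => rw [← add_assoc, pow1_succ, ih, pow1_succ, mul_assoc]

theorem pow1_succ' (x : S) (n : ℕ) : pow1 x (n + 1) = x * pow1 x n := by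
  simpa using pow1_add x 0 n

theorem pow1_mul_pow1_comm (x : S) (m n : ℕ) : pow1 x m * pow1 x n = pow1 x n * pow1 x m := by
  rw [← pow1_add, ← pow1_add, add_comm m]

theorem sprod_replicate (x : S) (n : ℕ) : sprod x (List.replicate n x) = pow1 x n := by
  induction n with
  | zero => rfl
  | succ n ih => rw [List.replicate_succ, sprod_cons, ih, pow1_succ']

theorem Subsemigroup.pow1_mem {M : Subsemigroup S} {x : S} (hx : x ∈ M) (n : ℕ) :
    pow1 x n ∈ M := by
  induction n with
  | zero => exact hx
  | succ n ih => exact M.mul_mem ih hx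

theorem Subsemigroup.sprod_mem {M : Subsemigroup S} {a : S} {l : List S} (ha : a ∈ M)
    (hl : ∀ y ∈ l, y ∈ M) : sprod a l ∈ M := by
  induction l generalizing a with
  | nil => exact ha
  | cons b l ih =>
    exact ih (M.mul_mem ha (hl b List.mem_cons_self)) fun y hy => hl y (List.mem_cons_of_mem b hy)

theorem mem_piSet_iff {T : List S} {s : S} :
    s ∈ PiSet T ↔ ∃ a l, (a :: l).Subperm T ∧ sprod a l = s :=
  ⟨fun ⟨u, hu, a, l, hperm, hs⟩ => ⟨a, l, ⟨u, hperm.symm, hu⟩, hs⟩,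
    fun ⟨a, l, ⟨u, hperm, hu⟩, hs⟩ => ⟨u, hu, a, l, hperm.symm, hs⟩⟩

theorem piSet_mono {T₁ T₂ : List S} (h : T₁.Subperm T₂) : PiSet T₁ ⊆ PiSet T₂ := by
  intro s hs
  obtain ⟨a, l, hsub, rfl⟩ := mem_piSet_iff.mp hs
  exact mem_piSet_iff.mpr ⟨a, l, hsub.trans h, rfl⟩

theorem piSet_perm {T₁ T₂ : List S} (h : T₁.Perm T₂) : PiSet T₁ = PiSet T₂ :=
  (piSet_mono h.subperm).antisymm (piSet_mono h.symm.subperm)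

@[simp] theorem piSet_nil : PiSet ([] : List S) = ∅ :=
  Set.eq_empty_of_forall_notMem fun _ hs => by
    obtain ⟨a, l, hsub, -⟩ := mem_piSet_iff.mp hs
    simpa using hsub.length_le

theorem mem_piSet_of_mem {T : List S} {a : S} (h : a ∈ T) : a ∈ PiSet T :=
  mem_piSet_iff.mpr ⟨a, [], List.singleton_subperm_iff.mpr h, rfl⟩

theorem mul_mem_piSet_cons {L : List S} {s : S} (t : S) (hs : s ∈ PiSet L) :
    t * s ∈ PiSet (t :: L) := by
  obtain ⟨a, l, hsub, rfl⟩ := mem_piSet_iff.mp hs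
  exact mem_piSet_iff.mpr ⟨t, a :: l, (List.subperm_cons t).mpr hsub, sprod_cons t a l⟩

theorem piSet_subset_closure (T : List S) :
    PiSet T ⊆ Subsemigroup.closure {s : S | s ∈ T} := by
  intro s hs
  obtain ⟨a, l, hsub, rfl⟩ := mem_piSet_iff.mp hs
  have hmem : ∀ y ∈ a :: l, y ∈ Subsemigroup.closure {s : S | s ∈ T} :=
    fun y hy => Subsemigroup.subset_closure (hsub.subset hy)
  exact Subsemigroup.sprod_mem (hmem a List.mem_cons_self)
    fun y hy => hmem y (List.mem_cons_of_mem a hy)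

theorem piSet_replicate (x : S) (m : ℕ) :
    PiSet (List.replicate m x) = pow1 x '' Set.Iio m := by
  ext s
  rw [mem_piSet_iff]
  constructor
  · rintro ⟨a, l, ⟨u, hperm, husub⟩, rfl⟩
    obtain ⟨n, hn, rfl⟩ := List.sublist_replicate_iff.mp husub
    have hal := List.perm_replicate.mp hperm.symm
    obtain rfl : n = l.length + 1 := by simpa using (congrArg List.length hal).symm
    rw [List.replicate_succ, List.cons.injEq] at hal
    obtain ⟨rfl, hl⟩ := hal
    exact ⟨l.length, by simpa using hn, ((congrArg (sprod a) hl).trans (sprod_replicate a _)).symm⟩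
  · rintro ⟨j, hj, rfl⟩
    refine ⟨x, List.replicate j x, ?_, sprod_replicate x j⟩
    rw [← List.replicate_succ]
    exact (List.replicate_sublist_replicate x |>.mpr hj).subperm

theorem List.replicate_count_subperm {α : Type*} [DecidableEq α] (l : List α) (a : α) :
    (List.replicate (l.count a) a).Subperm l :=
  (List.replicate_sublist_iff.mpr le_rfl).subperm

theorem pow1_add_mul_of_eq {x : S} {a d : ℕ} (h : pow1 x (a + d) = pow1 x a) {n : ℕ}
    (hn : a ≤ n) (k : ℕ) : pow1 x (n + k * d) = pow1 x n := by
  have hstep : ∀ c, pow1 x (a + c + d) = pow1 x (a + c) := by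
    intro c
    induction c with
    | zero => simpa using h
    | succ c ih => rw [show a + (c + 1) + d = a + c + d + 1 by ring, pow1_succ, ih, ← pow1_succ,
        add_assoc]
  obtain ⟨c, rfl⟩ := Nat.exists_eq_add_of_le hn
  induction k with
  | zero => simp
  | succ k ih =>
    rw [← ih, show a + c + (k + 1) * d = a + (c + k * d) + d by ring, hstep, ← add_assoc]

theorem pow1_eq_of_isIdempotentElem {x : S} {a b : ℕ} (ha : IsIdempotentElem (pow1 x a))
    (hb : IsIdempotentElem (pow1 x b)) : pow1 x a = pow1 x b := by
  have hper : ∀ {a}, IsIdempotentElem (pow1 x a) → ∀ k, pow1 x (a + k * (a + 1)) = pow1 x a :=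
    fun ha k => pow1_add_mul_of_eq (by rw [← add_assoc, pow1_add, ha]) le_rfl k
  -- both sides equal `x ^ ((a + 1) * (b + 1))`
  rw [← hper ha b, ← hper hb a]
  congr 1
  ring

theorem finite_range_pow1 (hfin : {y : S | ¬IsIdempotentElem y}.Finite) (x : S) :
    (Set.range (pow1 x)).Finite := by
  have hidem : {y ∈ Set.range (pow1 x) | IsIdempotentElem y}.Subsingleton := by
    rintro _ ⟨⟨a, rfl⟩, ha⟩ _ ⟨⟨b, rfl⟩, hb⟩
    exact pow1_eq_of_isIdempotentElem ha hb
  exact (hfin.union hidem.finite).subset fun y hy =>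
    (em (IsIdempotentElem y)).elim (fun hy' => Or.inr ⟨hy, hy'⟩) Or.inl

theorem exists_hasIndexPeriod {x : S} (hfin : (Set.range (pow1 x)).Finite) :
    ∃ r p, HasIndexPeriod x r p := by
  classical
  obtain ⟨a, b, hab, hne⟩ : ∃ a b, pow1 x a = pow1 x b ∧ a ≠ b := by
    by_contra! H
    exact Set.infinite_range_of_injective (fun a b => H a b) hfin
  have hr : ∃ r, 0 < r ∧ ∃ t, 0 < t ∧ t ≠ r ∧ pow1 x (t - 1) = pow1 x (r - 1) :=
    ⟨a + 1, by omega, b + 1, by omega, by omega, by simpa using hab.symm⟩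
  obtain ⟨hr0, t, ht0, htr, ht⟩ := Nat.find_spec hr
  have hrt : Nat.find hr < t :=
    (Nat.find_min' hr ⟨ht0, _, hr0, htr.symm, ht.symm⟩).lt_of_ne htr.symm
  have hp : ∃ p, 0 < p ∧ pow1 x (Nat.find hr + p - 1) = pow1 x (Nat.find hr - 1) :=
    ⟨t - Nat.find hr, by omega, by rwa [show Nat.find hr + (t - Nat.find hr) - 1 = t - 1 by omega]⟩
  exact ⟨_, _, ⟨hr0, ⟨t, ht0, htr, ht⟩, fun r' h0 h' => Nat.find_min' hr ⟨h0, h'⟩⟩,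
    (Nat.find_spec hp).1, (Nat.find_spec hp).2, fun p' h0 h' => Nat.find_min' hp ⟨h0, h'⟩⟩

def nonIdemPowers (x : S) : Set S := {y ∈ Set.range (pow1 x) | ¬IsIdempotentElem y}

namespace HasIndexPeriod

-- Exponents are those of `pow1`: `pow1 x (r - 1) = x ^ r`, and the distinct powers of `x` are the
-- `pow1 x n` with `n < r - 1 + p`.
variable {x : S} {r p : ℕ} (h : HasIndexPeriod x r p)
include h

theorem index_pos : 0 < r := h.1.1

theorem period_pos : 0 < p := h.2.1

theorem pow1_add_mul {n : ℕ} (hn : r - 1 ≤ n) (k : ℕ) : pow1 x (n + k * p) = pow1 x n :=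
  pow1_add_mul_of_eq (by rw [← h.2.2.1]; congr 1; have := h.index_pos; omega) hn k

theorem le_of_pow1_eq {a b : ℕ} (hab : a ≠ b) (heq : pow1 x a = pow1 x b) : r - 1 ≤ a := by
  have := h.1.2.2 (a + 1) a.succ_pos ⟨b + 1, b.succ_pos, by omega, by simpa using heq.symm⟩
  omega

theorem injOn : Set.InjOn (pow1 x) (Set.Iio (r - 1 + p)) := by
  suffices ∀ a b, a < b → b < r - 1 + p → pow1 x a ≠ pow1 x b by
    intro a ha b hb hab
    by_contra hne
    rcases lt_or_gt_of_ne hne with hlt | hlt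
    exacts [this a b hlt hb hab, this b a hlt ha hab.symm]
  intro a b hab hb heq
  have ha := h.le_of_pow1_eq hab.ne heq
  have hd : pow1 x (a + (b - a)) = pow1 x a := by rw [Nat.add_sub_cancel' hab.le, heq]
  have hap : a ≤ r - 1 + a * p := le_add_left (Nat.le_mul_of_pos_right a h.period_pos)
  have hper : pow1 x (r - 1 + (b - a)) = pow1 x (r - 1) :=
    calc pow1 x (r - 1 + (b - a))
        = pow1 x (r - 1 + (b - a) + a * p) := (h.pow1_add_mul (by omega) a).symm
      _ = pow1 x (r - 1 + a * p + 1 * (b - a)) := by ring_nf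
      _ = pow1 x (r - 1 + a * p) := pow1_add_mul_of_eq hd hap 1
      _ = pow1 x (r - 1) := h.pow1_add_mul le_rfl a
  have := h.2.2.2 (b - a) (by omega) (by rwa [show r + (b - a) - 1 = r - 1 + (b - a) by
    have := h.index_pos; omega])
  omega

theorem exists_pow1_eq (n : ℕ) : ∃ m < r - 1 + p, pow1 x n = pow1 x m := by
  rcases lt_or_ge n (r - 1) with hn | hn
  · exact ⟨n, by omega, rfl⟩
  refine ⟨r - 1 + (n - (r - 1)) % p, by have := Nat.mod_lt (n - (r - 1)) h.period_pos; omega, ?_⟩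
  rw [← h.pow1_add_mul le_self_add ((n - (r - 1)) / p)]
  congr 1
  have := Nat.mod_add_div' (n - (r - 1)) p
  omega

theorem range_eq : Set.range (pow1 x) = pow1 x '' Set.Iio (r - 1 + p) := by
  refine (Set.image_subset_range _ _).antisymm' ?_
  rintro _ ⟨n, rfl⟩
  obtain ⟨m, hm, heq⟩ := h.exists_pow1_eq n
  exact ⟨m, hm, heq.symm⟩

theorem ncard_range : (Set.range (pow1 x)).ncard = r - 1 + p := by
  rw [h.range_eq, h.injOn.ncard_image, Set.ncard_Iio_nat]

theorem isIdempotentElem_pow1 {n : ℕ} (hn : r - 1 ≤ n) (hdvd : p ∣ n + 1) :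
    IsIdempotentElem (pow1 x n) := by
  obtain ⟨k, hk⟩ := hdvd
  rw [IsIdempotentElem, ← pow1_add, add_assoc, hk, mul_comm, h.pow1_add_mul hn]

theorem exists_isIdempotentElem_pow1 :
    ∃ n, r - 1 ≤ n ∧ n < r - 1 + p ∧ p ∣ n + 1 ∧ IsIdempotentElem (pow1 x n) := by
  have hp := h.period_pos
  have hmod := Nat.mod_lt (r - 1) hp
  have hdiv := Nat.mod_add_div (r - 1) p
  have hdvd : p ∣ r - 1 + (p - 1 - (r - 1) % p) + 1 := ⟨(r - 1) / p + 1, by rw [mul_add]; omega⟩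
  exact ⟨_, le_self_add, by omega, hdvd, h.isIdempotentElem_pow1 le_self_add hdvd⟩

theorem finite_range : (Set.range (pow1 x)).Finite :=
  h.range_eq ▸ (Set.finite_Iio _).image _

theorem ncard_nonIdemPowers : (nonIdemPowers x).ncard = r + p - 2 := by
  obtain ⟨n, -, -, -, hn⟩ := h.exists_isIdempotentElem_pow1
  have : nonIdemPowers x = Set.range (pow1 x) \ {pow1 x n} := by
    ext y
    constructor
    · rintro ⟨hy, hy'⟩
      exact ⟨hy, fun e => hy' (Set.mem_singleton_iff.mp e ▸ hn)⟩
    · rintro ⟨⟨m, rfl⟩, hne⟩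
      exact ⟨⟨m, rfl⟩, fun hm => hne (pow1_eq_of_isIdempotentElem hm hn)⟩
  rw [this, Set.ncard_sdiff_singleton_of_mem (Set.mem_range_self n), h.ncard_range]
  have := h.index_pos
  omega

theorem modEq_one (hm : ∀ j < r + p - 2, ¬IsIdempotentElem (pow1 x j)) : r ≡ 1 [MOD p] := by
  obtain ⟨n, hn₁, hn₂, hdvd, hn⟩ := h.exists_isIdempotentElem_pow1
  have hr := h.index_pos
  obtain rfl : n = p + (r - 1) - 1 := by
    by_contra hne
    exact hm n (by omega) hn
  rw [Nat.sub_add_cancel (by omega), Nat.dvd_add_right (dvd_refl p)] at hdvd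
  exact ((Nat.modEq_iff_dvd' hr).mpr hdvd).symm

end HasIndexPeriod

theorem piSet_ssubset_cons {t : S} {L : List S}
    (hN : PiSet (t :: L) ⊆ {y | ¬IsIdempotentElem y}) (hfin : (PiSet (t :: L)).Finite) :
    PiSet L ⊂ PiSet (t :: L) := by
  refine (piSet_mono (L.sublist_cons_self t).subperm).ssubset_of_ne fun hL => ?_
  have hpow : ∀ n, pow1 t n ∈ PiSet (t :: L) := by
    intro n
    induction n with
    | zero => exact mem_piSet_of_mem List.mem_cons_self
    | succ n ih => rw [pow1_succ']; exact mul_mem_piSet_cons t (hL ▸ ih)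
  obtain ⟨r, p, h⟩ := exists_hasIndexPeriod (hfin.subset (Set.range_subset_iff.mpr hpow))
  obtain ⟨n, -, -, -, hn⟩ := h.exists_isIdempotentElem_pow1
  exact hN (hpow n) hn

theorem ncard_piSet_add_length_le (d u : List S)
    (hN : PiSet (d ++ u) ⊆ {y | ¬IsIdempotentElem y}) (hfin : (PiSet (d ++ u)).Finite) :
    (PiSet u).ncard + d.length ≤ (PiSet (d ++ u)).ncard := by
  induction d with
  | nil => simp
  | cons t d ih =>
    rw [List.cons_append] at hN hfin ⊢
    have hsub : PiSet (d ++ u) ⊆ PiSet (t :: d ++ u) :=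
      piSet_mono ((d ++ u).sublist_cons_self t).subperm
    have := Set.ncard_lt_ncard (piSet_ssubset_cons hN hfin) hfin
    have := ih (hsub.trans hN) (hfin.subset hsub)
    simp only [List.length_cons]
    omega

structure IsMaxIdemProductFree (T : List S) : Prop where
  finite_nonIdem : {y : S | ¬IsIdempotentElem y}.Finite
  piSet_subset : PiSet T ⊆ {y : S | ¬IsIdempotentElem y}
  length_eq : T.length = {y : S | ¬IsIdempotentElem y}.ncard

namespace IsMaxIdemProductFree

variable {T : List S} (hT : IsMaxIdemProductFree T)
include hT

theorem ncard_piSet_of_subperm {u : List S} (hu : u.Subperm T) :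
    (PiSet u).ncard = u.length := by
  obtain ⟨u', hperm, hsub⟩ := hu
  obtain ⟨d, hd⟩ := hsub.exists_perm_append
  have hTdu : T.Perm (d ++ u) := (hd.trans (hperm.append_right d)).trans List.perm_append_comm
  have hN : PiSet (d ++ u) ⊆ {y | ¬IsIdempotentElem y} := piSet_perm hTdu ▸ hT.piSet_subset
  have hfin : (PiSet (d ++ u)).Finite := hT.finite_nonIdem.subset hN
  have hupper : (PiSet (d ++ u)).ncard ≤ d.length + u.length :=
    calc (PiSet (d ++ u)).ncard
        ≤ {y : S | ¬IsIdempotentElem y}.ncard := Set.ncard_le_ncard hN hT.finite_nonIdem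
      _ = d.length + u.length := by rw [← hT.length_eq, hTdu.length_eq, List.length_append]
  have hsub : PiSet u ⊆ PiSet (d ++ u) := piSet_mono (List.sublist_append_right d u).subperm
  have hlower := ncard_piSet_add_length_le u [] (by simpa using hsub.trans hN)
    (by simpa using hfin.subset hsub)
  have := ncard_piSet_add_length_le d u hN hfin
  simp only [piSet_nil, Set.ncard_empty, List.append_nil] at hlower
  omega

theorem piSet_eq : PiSet T = {y | ¬IsIdempotentElem y} :=
  Set.eq_of_subset_of_ncard_le hT.piSet_subset
    (by rw [hT.ncard_piSet_of_subperm (List.Subperm.refl T), hT.length_eq]) hT.finite_nonIdem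

theorem piSet_pair {x y : S} (hx : x ∈ T) (hy : y ∈ T) (hne : x ≠ y) :
    PiSet [x, y] = {x, y} := by
  have hsub : [x, y].Subperm T := (by simp [hne] : [x, y].Nodup).subperm (by simp [hx, hy])
  have hpair : {x, y} ⊆ PiSet [x, y] := Set.insert_subset_iff.mpr
    ⟨mem_piSet_of_mem (by simp), Set.singleton_subset_iff.mpr (mem_piSet_of_mem (by simp))⟩
  refine (Set.eq_of_subset_of_ncard_le hpair ?_
    (hT.finite_nonIdem.subset ((piSet_mono hsub).trans hT.piSet_subset))).symm
  rw [hT.ncard_piSet_of_subperm hsub, Set.ncard_pair hne]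
  rfl

theorem mul_eq_right_or_mul_eq_left {x y : S} (hx : x ∈ T) (hy : y ∈ T) (hne : x ≠ y) :
    (x * y = y ∧ y * x = y) ∨ (x * y = x ∧ y * x = x) := by
  have hxy : x * y ∈ PiSet [x, y] := mem_piSet_iff.mpr ⟨x, [y], List.Subperm.refl _, rfl⟩
  have hyx : y * x ∈ PiSet [x, y] :=
    mem_piSet_iff.mpr ⟨y, [x], (List.Perm.swap x y []).subperm, rfl⟩
  rw [hT.piSet_pair hx hy hne] at hxy hyx
  have hx' : ¬IsIdempotentElem x := hT.piSet_subset (mem_piSet_of_mem hx)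
  have hy' : ¬IsIdempotentElem y := hT.piSet_subset (mem_piSet_of_mem hy)
  rcases hxy with h₁ | h₁ <;> rcases hyx with h₂ | h₂
  · exact Or.inr ⟨h₁, h₂⟩
  · refine absurd ?_ hx'
    calc x * x = x * y * x := by rw [h₁]
      _ = x := by rw [mul_assoc, h₂, h₁]
  · refine absurd ?_ hy'
    calc y * y = y * (x * y) := by rw [h₁]
      _ = y := by rw [← mul_assoc, h₂, h₁]
  · exact Or.inl ⟨h₁, h₂⟩

variable [DecidableEq S]

theorem not_isIdempotentElem_pow1 {x : S} {j : ℕ} (hj : j < T.count x) :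
    ¬IsIdempotentElem (pow1 x j) := by
  refine hT.piSet_subset (piSet_mono (T.replicate_count_subperm x) ?_)
  rw [piSet_replicate]
  exact ⟨j, hj, rfl⟩

theorem count_le_ncard_nonIdemPowers (x : S) : T.count x ≤ (nonIdemPowers x).ncard := by
  have hcard := hT.ncard_piSet_of_subperm (T.replicate_count_subperm x)
  rw [piSet_replicate, List.length_replicate] at hcard
  rw [← hcard]
  refine Set.ncard_le_ncard ?_ (hT.finite_nonIdem.subset fun y hy => hy.2)
  rintro _ ⟨j, hj, rfl⟩
  exact ⟨Set.mem_range_self j, hT.not_isIdempotentElem_pow1 hj⟩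

theorem count_eq_ncard_nonIdemPowers {k : ℕ} {x : Fin k → S} (hx : Function.Injective x)
    (hrange : Set.range x = {s | s ∈ T})
    (hdisj : Pairwise (Function.onFun Disjoint fun i => nonIdemPowers (x i))) (i : Fin k) :
    T.count (x i) = (nonIdemPowers (x i)).ncard := by
  have hcount : ∑ i, T.count (x i) = T.length := by
    have hsupp : T.toFinset = Finset.univ.image x := by
      ext s
      simpa [eq_comm] using (Set.ext_iff.mp hrange s).symm
    rw [← List.sum_toFinset_count_eq_length, hsupp, Finset.sum_image fun i _ j _ h => hx h]
  have hnonIdem : ∑ i, (nonIdemPowers (x i)).ncard ≤ T.length := by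
    rw [← finsum_eq_sum_of_fintype, ← Set.ncard_iUnion_of_finite
      (fun i => hT.finite_nonIdem.subset fun y hy => hy.2) hdisj, hT.length_eq]
    exact Set.ncard_le_ncard (Set.iUnion_subset fun i y hy => hy.2) hT.finite_nonIdem
  have hle : ∀ i ∈ Finset.univ, T.count (x i) ≤ (nonIdemPowers (x i)).ncard :=
    fun i _ => hT.count_le_ncard_nonIdemPowers (x i)
  exact (Finset.sum_eq_sum_iff_of_le hle).mp
    ((Finset.sum_le_sum hle).antisymm (hcount ▸ hnonIdem)) i (Finset.mem_univ i)

end IsMaxIdemProductFree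

theorem pow1_mul_pow1_of_mul_eq_right {a b : S} (h : a * b = b) (c d : ℕ) :
    pow1 a c * pow1 b d = pow1 b d := by
  have hb : ∀ d, a * pow1 b d = pow1 b d := by
    intro d
    induction d with
    | zero => exact h
    | succ d ih => rw [pow1_succ, ← mul_assoc, ih]
  induction c with
  | zero => exact hb d
  | succ c ih => rw [pow1_succ, mul_assoc, hb, ih]

theorem pow1_mul_pow1_of_mul_eq_left {a b : S} (h : b * a = b) (c d : ℕ) :
    pow1 b d * pow1 a c = pow1 b d := by
  have hb : ∀ d, pow1 b d * a = pow1 b d := by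
    intro d
    induction d with
    | zero => exact h
    | succ d ih => rw [pow1_succ', mul_assoc, ih]
  induction c with
  | zero => exact hb d
  | succ c ih => rw [pow1_succ, ← mul_assoc, ih, hb]

def IsAbsorbingChain {ι : Type*} [LT ι] (x : ι → S) : Prop :=
  ∀ ⦃i j⦄, i < j → x i * x j = x j ∧ x j * x i = x j

theorem exists_isAbsorbingChain (A : Finset S) (hA : ∀ a ∈ A, ¬IsIdempotentElem a)
    (htot : ∀ a ∈ A, ∀ b ∈ A, a ≠ b → (a * b = b ∧ b * a = b) ∨ (a * b = a ∧ b * a = a)) :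
    ∃ (k : ℕ) (x : Fin k → S), Function.Injective x ∧ Set.range x = A ∧ IsAbsorbingChain x := by
  classical
  let r : A → A → Prop := fun a b => a.1 * b.1 = b.1 ∧ b.1 * a.1 = b.1
  have : IsStrictTotalOrder A r :=
    { irrefl := fun a h => hA a a.2 h.1
      trans := fun a b c hab hbc =>
        ⟨by rw [← hbc.1, ← mul_assoc, hab.1], by rw [← hbc.2, mul_assoc, hab.2]⟩
      trichotomous := fun a b hab hba => by
        by_contra hne
        rcases htot a a.2 b b.2 (Subtype.coe_ne_coe.mpr hne) with h | h
        exacts [hab h, hba ⟨h.2, h.1⟩] }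
  let := linearOrderOfSTO r
  let e := monoEquivOfFin A rfl
  refine ⟨_, fun i => e i, Subtype.val_injective.comp e.injective, ?_,
    fun i j hij => e.strictMono hij⟩
  ext s
  exact ⟨fun ⟨i, hi⟩ => hi ▸ (e i).2, fun hs => ⟨e.symm ⟨s, hs⟩, by simp⟩⟩

namespace IsAbsorbingChain

variable {ι : Type*} [LinearOrder ι] {x : ι → S} (hx : IsAbsorbingChain x)
include hx

theorem pow1_mul_pow1_comm {i j : ι} (c d : ℕ) :
    pow1 (x i) c * pow1 (x j) d = pow1 (x j) d * pow1 (x i) c := by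
  rcases lt_trichotomy i j with hij | rfl | hij
  · rw [pow1_mul_pow1_of_mul_eq_right (hx hij).1, pow1_mul_pow1_of_mul_eq_left (hx hij).2]
  · exact _root_.pow1_mul_pow1_comm (x i) c d
  · rw [pow1_mul_pow1_of_mul_eq_right (hx hij).1, pow1_mul_pow1_of_mul_eq_left (hx hij).2]

theorem pow1_mul_pow1_mem_iUnion (i j : ι) (c d : ℕ) :
    pow1 (x i) c * pow1 (x j) d ∈ ⋃ l, Set.range (pow1 (x l)) := by
  rcases lt_trichotomy i j with hij | rfl | hij
  · exact Set.mem_iUnion.mpr ⟨j, d, (pow1_mul_pow1_of_mul_eq_right (hx hij).1 c d).symm⟩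
  · exact Set.mem_iUnion.mpr ⟨i, c + d + 1, pow1_add _ c d⟩
  · exact Set.mem_iUnion.mpr ⟨i, c, (pow1_mul_pow1_of_mul_eq_left (hx hij).2 d c).symm⟩

theorem closure_range_eq :
    (Subsemigroup.closure (Set.range x) : Set S) = ⋃ i, Set.range (pow1 (x i)) := by
  refine subset_antisymm (fun s hs => ?_) (Set.iUnion_subset fun i => Set.range_subset_iff.mpr
    (Subsemigroup.pow1_mem (Subsemigroup.subset_closure ⟨i, rfl⟩)))
  induction hs using Subsemigroup.closure_induction with
  | mem s hs =>
    obtain ⟨i, rfl⟩ := hs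
    exact Set.mem_iUnion.mpr ⟨i, 0, rfl⟩
  | mul a b _ _ ha hb =>
    obtain ⟨i, c, rfl⟩ := Set.mem_iUnion.mp ha
    obtain ⟨j, d, rfl⟩ := Set.mem_iUnion.mp hb
    exact hx.pow1_mul_pow1_mem_iUnion i j c d

theorem disjoint_nonIdemPowers :
    Pairwise (Function.onFun Disjoint fun i => nonIdemPowers (x i)) := by
  suffices ∀ ⦃i j⦄, i < j → Disjoint (nonIdemPowers (x i)) (nonIdemPowers (x j)) from
    fun i j hij => hij.lt_or_gt.elim (fun h => this h) (fun h => (this h).symm)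
  intro i j hij
  rw [Set.disjoint_left]
  rintro _ ⟨⟨c, rfl⟩, -⟩ ⟨⟨d, hd⟩, hnon⟩
  refine hnon ?_
  calc pow1 (x i) c * pow1 (x i) c = pow1 (x i) c * pow1 (x j) d := by rw [hd]
    _ = pow1 (x i) c := by rw [pow1_mul_pow1_of_mul_eq_right (hx hij).1, hd]

end IsAbsorbingChain

end

theorem stmt_13_general {S : Type*} [Semigroup S] [DecidableEq S]
    (hfin : {x : S | x * x ≠ x}.Finite)
    (T : List S) (hlen : T.length = {x : S | x * x ≠ x}.ncard)
    (hfree : PiSet T ∩ {e : S | e * e = e} = ∅) :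
    ∃ (k : ℕ) (x : Fin k → S), Function.Injective x ∧
      (∀ s : S, s ∈ T ↔ ∃ i, s = x i) ∧
      ((Subsemigroup.closure {s : S | s ∈ T} : Set S)
        = ⋃ i, Set.range (pow1 (x i))) ∧
      (∀ a ∈ Subsemigroup.closure {s : S | s ∈ T},
        ∀ b ∈ Subsemigroup.closure {s : S | s ∈ T}, a * b = b * a) ∧
      (∀ i j, i < j → x i * x j = x j) ∧
      (∀ i j, i ≠ j →
        {y ∈ Set.range (pow1 (x i)) | y * y ≠ y}
          ∩ {y ∈ Set.range (pow1 (x j)) | y * y ≠ y} = ∅) ∧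
      (∀ s : S, s ∉ (Subsemigroup.closure {s : S | s ∈ T} : Set S) → s * s = s) ∧
      (∀ i, (Set.range (pow1 (x i))).Finite ∧
        ∃ r p : ℕ, HasIndexPeriod (x i) r p ∧ r ≡ 1 [MOD p] ∧
          T.count (x i) = r + p - 2) := by
  have hT : IsMaxIdemProductFree T :=
    ⟨hfin, fun s hs he => Set.eq_empty_iff_forall_notMem.mp hfree s ⟨hs, he⟩, hlen⟩
  obtain ⟨k, x, hinj, hrange, hchain⟩ := exists_isAbsorbingChain T.toFinset
    (fun a ha => hT.piSet_subset (mem_piSet_of_mem (List.mem_toFinset.mp ha)))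
    (fun a ha b hb =>
      hT.mul_eq_right_or_mul_eq_left (List.mem_toFinset.mp ha) (List.mem_toFinset.mp hb))
  have hsupp : Set.range x = {s | s ∈ T} := by simp [hrange]
  have hclosure := hsupp ▸ hchain.closure_range_eq
  refine ⟨k, x, hinj, fun s => ?_, hclosure, fun a ha b hb => ?_, fun i j hij => (hchain hij).1,
    fun i j hij => Set.disjoint_iff_inter_eq_empty.mp (hchain.disjoint_nonIdemPowers hij),
    fun s hs => ?_, fun i => ?_⟩
  · exact (Set.ext_iff.mp hsupp s).symm.trans (Set.mem_range.trans (exists_congr fun i => eq_comm))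
  · rw [← SetLike.mem_coe, hclosure, Set.mem_iUnion] at ha hb
    obtain ⟨i, c, rfl⟩ := ha
    obtain ⟨j, d, rfl⟩ := hb
    exact hchain.pow1_mul_pow1_comm c d
  · by_contra hnon
    exact hs (piSet_subset_closure T (hT.piSet_eq.symm ▸ hnon))
  · obtain ⟨r, p, hrp⟩ := exists_hasIndexPeriod (finite_range_pow1 hfin (x i))
    have hcount : T.count (x i) = r + p - 2 :=
      (hT.count_eq_ncard_nonIdemPowers hinj hsupp hchain.disjoint_nonIdemPowers i).trans
        hrp.ncard_nonIdemPowers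
    exact ⟨hrp.finite_range, r, p, hrp,
      hrp.modEq_one fun j hj => hT.not_isIdempotentElem_pow1 (hcount ▸ hj), hcount⟩

/-- Necessity of the main theorem: the structure of an idempotent-product free
sequence `T` of maximal length `|S \ E(S)|`. -/
theorem stmt_13 {S : Type*} [Semigroup S] [Nonempty S] [DecidableEq S]
    (hfin : {x : S | x * x ≠ x}.Finite)
    (T : List S) (hlen : T.length = {x : S | x * x ≠ x}.ncard)
    (hfree : PiSet T ∩ {e : S | e * e = e} = ∅) :
    ∃ (k : ℕ) (x : Fin k → S), Function.Injective x ∧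
      (∀ s : S, s ∈ T ↔ ∃ i, s = x i) ∧
      ((Subsemigroup.closure {s : S | s ∈ T} : Set S)
        = ⋃ i, Set.range (pow1 (x i))) ∧
      (∀ a ∈ Subsemigroup.closure {s : S | s ∈ T},
        ∀ b ∈ Subsemigroup.closure {s : S | s ∈ T}, a * b = b * a) ∧
      (∀ i j, i < j → x i * x j = x j) ∧
      (∀ i j, i ≠ j →
        {y ∈ Set.range (pow1 (x i)) | y * y ≠ y}
          ∩ {y ∈ Set.range (pow1 (x j)) | y * y ≠ y} = ∅) ∧
      (∀ s : S, s ∉ (Subsemigroup.closure {s : S | s ∈ T} : Set S) → s * s = s) ∧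
      (∀ i, (Set.range (pow1 (x i))).Finite ∧
        ∃ r p : ℕ, HasIndexPeriod (x i) r p ∧ r ≡ 1 [MOD p] ∧
          T.count (x i) = r + p - 2) :=
  stmt_13_general hfin T hlen hfree
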